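/- If π/4 ≤ α ≤ π/2 and π/3 ≤ β ≤ 2π/3, and moreover α ≥ 78π/180, or β ≤ 83π/180, or β ≥ 97π/180, then μ(x₁,y₁,α,x₂,y₂,β) > 0.23 for all real x₁, y₁, x₂, y₂. -/

import Mathlib

open Real MeasureTheory

noncomputable def pt (x y : ℝ) : EuclideanSpace ℝ (Fin 2) :=
  (WithLp.equiv 2 (Fin 2 → ℝ)).symm ![x, y]

noncomputable def sqVertex (x y a : ℝ) (k : Fin 4) : EuclideanSpace ℝ (Fin 2) :=
  pt (x + Real.sqrt 2 / 6 * Real.cos (a + ((k : ℕ) : ℝ) * (Real.pi / 2)))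
     (y + Real.sqrt 2 / 6 * Real.sin (a + ((k : ℕ) : ℝ) * (Real.pi / 2)))

noncomputable def triVertex (x y b : ℝ) (k : Fin 3) : EuclideanSpace ℝ (Fin 2) :=
  pt (x + Real.sqrt 3 / 6 * Real.cos (b + ((k : ℕ) : ℝ) * (2 * Real.pi / 3)))
     (y + Real.sqrt 3 / 6 * Real.sin (b + ((k : ℕ) : ℝ) * (2 * Real.pi / 3)))

noncomputable def config (x1 y1 a x2 y2 b : ℝ) : Set (EuclideanSpace ℝ (Fin 2)) :=
  {pt 0 0, pt 1 0} ∪ Set.range (sqVertex x1 y1 a) ∪ Set.range (triVertex x2 y2 b)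

noncomputable def area (x1 y1 a x2 y2 b : ℝ) : ℝ :=
  (volume (convexHull ℝ (config x1 y1 a x2 y2 b))).toReal

/-! The convex hull contains the triangle with base `EF` and apex at any point `P` of the
configuration, of area `|P.y| / 2`; for two points on opposite sides of the line `EF` these
triangles are disjoint. Hence the area is at least half the height difference of any two points
of the configuration. Between opposite vertices of the square this difference is `(√2/3) sin α`,
and between vertices of the triangle it is `½ sin (β + π/6)` or `½ sin (β - π/6)`; each angle
condition makes one of these exceed `0.46`. -/

open Set

noncomputable def triangleMap (p q : ℝ) : ℝ × ℝ →ₗ[ℝ] ℝ × ℝ where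
  toFun z := (z.1 + p * z.2, q * z.2)
  map_add' z w := by ext <;> simp only [Prod.fst_add, Prod.snd_add] <;> ring
  map_smul' c z := by
    ext <;> simp only [Prod.smul_fst, Prod.smul_snd, smul_eq_mul, RingHom.id_apply] <;> ring

theorem det_triangleMap (p q : ℝ) : LinearMap.det (triangleMap p q) = q := by
  rw [← LinearMap.det_toMatrix (Module.Basis.finTwoProd ℝ), Matrix.det_fin_two]
  simp [LinearMap.toMatrix_apply, triangleMap]

noncomputable def stdTriangle : Set (ℝ × ℝ) :=
  regionBetween (fun _ => 0) (fun x => 1 - x) (Ioo 0 1)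

theorem volume_stdTriangle : volume stdTriangle = ENNReal.ofReal (1 / 2) := by
  have hint : IntegrableOn (fun x : ℝ => 1 - x) (Ioo 0 1) :=
    (continuous_const.sub continuous_id).integrableOn_Icc.mono_set Ioo_subset_Icc_self
  rw [stdTriangle, Measure.volume_eq_prod, volume_regionBetween_eq_integral
    (integrableOn_const (by simp)) hint measurableSet_Ioo
    (fun x hx => by simp only [mem_Ioo] at hx; linarith [hx.2]),
    ← integral_Ioc_eq_integral_Ioo, ← intervalIntegral.integral_of_le zero_le_one]
  norm_num [intervalIntegral.integral_sub intervalIntegrable_const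
    intervalIntegral.intervalIntegrable_id]

section ConvexTriangle

variable {K : Set (ℝ × ℝ)} {P Q : ℝ × ℝ}

theorem Convex.image_triangleMap_stdTriangle_subset (hK : Convex ℝ K) (h0 : (0, 0) ∈ K)
    (h1 : (1, 0) ∈ K) (hP : P ∈ K) : triangleMap P.1 P.2 '' stdTriangle ⊆ K := by
  rintro _ ⟨⟨u, v⟩, ⟨⟨hu0, -⟩, hv0, hv1⟩, rfl⟩
  have huv : 0 < u + v := by positivity
  -- `u e₁ + v P` is a convex combination of `0` and a point of the edge `[e₁, P]`
  have hedge : (u / (u + v)) • ((1 : ℝ), (0 : ℝ)) + (v / (u + v)) • P ∈ K :=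
    hK h1 hP (by positivity) (by positivity) (by field_simp)
  convert hK h0 hedge (a := 1 - (u + v)) (b := u + v) (by linarith) huv.le (by ring) using 1
  ext <;> simp [triangleMap] <;> field_simp

theorem sign_snd_of_mem_image_triangleMap {p q : ℝ} {z : ℝ × ℝ}
    (hz : z ∈ triangleMap p q '' stdTriangle) : SignType.sign z.2 = SignType.sign q := by
  obtain ⟨⟨u, v⟩, ⟨-, hv0, -⟩, rfl⟩ := hz
  change SignType.sign (q * v) = _
  rw [sign_mul, sign_pos hv0, mul_one]

theorem volume_image_triangleMap_stdTriangle (p q : ℝ) :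
    volume (triangleMap p q '' stdTriangle) = ENNReal.ofReal (|q| / 2) := by
  rw [Measure.addHaar_image_linearMap, det_triangleMap, volume_stdTriangle,
    ← ENNReal.ofReal_mul (abs_nonneg q)]
  ring_nf

theorem Convex.ofReal_half_abs_snd_le_volume (hK : Convex ℝ K) (h0 : (0, 0) ∈ K)
    (h1 : (1, 0) ∈ K) (hP : P ∈ K) : ENNReal.ofReal (|P.2| / 2) ≤ volume K := by
  rw [← volume_image_triangleMap_stdTriangle P.1]
  exact measure_mono (hK.image_triangleMap_stdTriangle_subset h0 h1 hP)

theorem Convex.ofReal_half_sub_snd_le_volume_of_pos_of_neg (hK : Convex ℝ K) (h0 : (0, 0) ∈ K)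
    (h1 : (1, 0) ∈ K) (hP : P ∈ K) (hQ : Q ∈ K) (hP2 : 0 < P.2) (hQ2 : Q.2 < 0) :
    ENNReal.ofReal ((P.2 - Q.2) / 2) ≤ volume K := by
  set H : Set (ℝ × ℝ) := {z | 0 < z.2}
  have hH : MeasurableSet H := measurableSet_lt measurable_const measurable_snd
  have hupper : triangleMap P.1 P.2 '' stdTriangle ⊆ K ∩ H := fun z hz =>
    ⟨hK.image_triangleMap_stdTriangle_subset h0 h1 hP hz,
      sign_eq_one_iff.mp ((sign_snd_of_mem_image_triangleMap hz).trans (sign_pos hP2))⟩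
  have hlower : triangleMap Q.1 Q.2 '' stdTriangle ⊆ K \ H := fun z hz =>
    ⟨hK.image_triangleMap_stdTriangle_subset h0 h1 hQ hz, lt_asymm <|
      sign_eq_neg_one_iff.mp ((sign_snd_of_mem_image_triangleMap hz).trans (sign_neg hQ2))⟩
  calc ENNReal.ofReal ((P.2 - Q.2) / 2)
        = ENNReal.ofReal (|P.2| / 2) + ENNReal.ofReal (|Q.2| / 2) := by
        rw [abs_of_pos hP2, abs_of_neg hQ2, ← ENNReal.ofReal_add (by positivity) (by linarith)]
        ring_nf
    _ ≤ volume (K ∩ H) + volume (K \ H) := by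
        rw [← volume_image_triangleMap_stdTriangle P.1,
          ← volume_image_triangleMap_stdTriangle Q.1]
        exact add_le_add (measure_mono hupper) (measure_mono hlower)
    _ = volume K := measure_inter_add_sdiff K hH

theorem Convex.ofReal_half_sub_snd_le_volume (hK : Convex ℝ K) (h0 : (0, 0) ∈ K)
    (h1 : (1, 0) ∈ K) (hP : P ∈ K) (hQ : Q ∈ K) :
    ENNReal.ofReal ((P.2 - Q.2) / 2) ≤ volume K := by
  rcases lt_or_ge 0 P.2 with hP2 | hP2
  · rcases lt_or_ge Q.2 0 with hQ2 | hQ2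
    · exact hK.ofReal_half_sub_snd_le_volume_of_pos_of_neg h0 h1 hP hQ hP2 hQ2
    · refine le_trans (ENNReal.ofReal_le_ofReal ?_) (hK.ofReal_half_abs_snd_le_volume h0 h1 hP)
      linarith [le_abs_self P.2]
  · refine le_trans (ENNReal.ofReal_le_ofReal ?_) (hK.ofReal_half_abs_snd_le_volume h0 h1 hQ)
    linarith [neg_le_abs Q.2]

end ConvexTriangle

noncomputable def planeEquiv : ℝ × ℝ ≃ᵐ EuclideanSpace ℝ (Fin 2) :=
  MeasurableEquiv.finTwoArrow.symm.trans (MeasurableEquiv.toLp 2 (Fin 2 → ℝ))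

theorem measurePreserving_planeEquiv : MeasurePreserving planeEquiv :=
  ((EuclideanSpace.volume_preserving_symm_measurableEquiv_toLp (Fin 2)).symm _).comp
    ((volume_preserving_finTwoArrow ℝ).symm _)

theorem Convex.preimage_planeEquiv {K : Set (EuclideanSpace ℝ (Fin 2))} (hK : Convex ℝ K) :
    Convex ℝ (planeEquiv ⁻¹' K) :=
  hK.linear_preimage ((WithLp.linearEquiv 2 ℝ (Fin 2 → ℝ)).symm.toLinearMap ∘ₗ
    (LinearEquiv.finTwoArrow ℝ ℝ).symm.toLinearMap)

theorem planeEquiv_symm_snd (P : EuclideanSpace ℝ (Fin 2)) : (planeEquiv.symm P).2 = P 1 := rfl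

theorem planeEquiv_symm_pt (x y : ℝ) : planeEquiv.symm (pt x y) = (x, y) := rfl

theorem Convex.ofReal_half_sub_le_volume {K : Set (EuclideanSpace ℝ (Fin 2))} (hK : Convex ℝ K)
    (h0 : pt 0 0 ∈ K) (h1 : pt 1 0 ∈ K) {P Q : EuclideanSpace ℝ (Fin 2)} (hP : P ∈ K)
    (hQ : Q ∈ K) : ENNReal.ofReal ((P 1 - Q 1) / 2) ≤ volume K := by
  have hmem : ∀ {R}, R ∈ K → planeEquiv.symm R ∈ planeEquiv ⁻¹' K := fun hR => by
    simpa only [mem_preimage, MeasurableEquiv.apply_symm_apply] using hR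
  rw [← measurePreserving_planeEquiv.measure_preimage_equiv K]
  simpa only [planeEquiv_symm_snd] using hK.preimage_planeEquiv.ofReal_half_sub_snd_le_volume
    (planeEquiv_symm_pt 0 0 ▸ hmem h0) (planeEquiv_symm_pt 1 0 ▸ hmem h1) (hmem hP) (hmem hQ)

section Configuration

variable (x1 y1 a x2 y2 b : ℝ)

theorem pt_zero_zero_mem_config : pt 0 0 ∈ config x1 y1 a x2 y2 b :=
  Or.inl (Or.inl (Or.inl rfl))

theorem pt_one_zero_mem_config : pt 1 0 ∈ config x1 y1 a x2 y2 b :=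
  Or.inl (Or.inl (Or.inr rfl))

theorem sqVertex_mem_config (k : Fin 4) : sqVertex x1 y1 a k ∈ config x1 y1 a x2 y2 b :=
  Or.inl (Or.inr ⟨k, rfl⟩)

theorem triVertex_mem_config (k : Fin 3) : triVertex x2 y2 b k ∈ config x1 y1 a x2 y2 b :=
  Or.inr ⟨k, rfl⟩

theorem finite_config : (config x1 y1 a x2 y2 b).Finite :=
  ((Set.toFinite _).union (Set.finite_range _)).union (Set.finite_range _)

variable {x1 y1 a x2 y2 b}

theorem half_sub_le_area {P Q : EuclideanSpace ℝ (Fin 2)} (hP : P ∈ config x1 y1 a x2 y2 b)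
    (hQ : Q ∈ config x1 y1 a x2 y2 b) : (P 1 - Q 1) / 2 ≤ area x1 y1 a x2 y2 b := by
  have hfin : volume (convexHull ℝ (config x1 y1 a x2 y2 b)) ≠ ⊤ :=
    ((finite_config x1 y1 a x2 y2 b).isCompact_convexHull (𝕜 := ℝ)).measure_lt_top.ne
  have hsub := subset_convexHull ℝ (config x1 y1 a x2 y2 b)
  exact (ENNReal.ofReal_le_iff_le_toReal hfin).mp <|
    (convex_convexHull ℝ _).ofReal_half_sub_le_volume
      (hsub (pt_zero_zero_mem_config ..)) (hsub (pt_one_zero_mem_config ..)) (hsub hP) (hsub hQ)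

end Configuration

theorem pt_one (x y : ℝ) : pt x y 1 = y := rfl

theorem sqVertex_zero_sub_two_snd (x y a : ℝ) :
    sqVertex x y a 0 1 - sqVertex x y a 2 1 = √2 / 3 * sin a := by
  simp only [sqVertex, pt_one, Fin.val_zero, Fin.val_two, CharP.cast_eq_zero, Nat.cast_ofNat,
    zero_mul, add_zero]
  rw [show a + 2 * (π / 2) = a + π by ring, sin_add_pi]
  ring

theorem triVertex_zero_sub_two_snd (x y b : ℝ) :
    triVertex x y b 0 1 - triVertex x y b 2 1 = 1 / 2 * sin (b + π / 6) := by
  simp only [triVertex, pt_one, Fin.val_zero, Fin.val_two, CharP.cast_eq_zero, Nat.cast_ofNat,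
    zero_mul, add_zero]
  rw [show b + 2 * (2 * π / 3) = b + π / 3 + π by ring, sin_add_pi, sin_add, sin_add,
    cos_pi_div_three, sin_pi_div_three, cos_pi_div_six, sin_pi_div_six]
  linear_combination (cos b / 12) * Real.mul_self_sqrt (show (0 : ℝ) ≤ 3 by norm_num)

theorem triVertex_zero_sub_one_snd (x y b : ℝ) :
    triVertex x y b 0 1 - triVertex x y b 1 1 = 1 / 2 * sin (b - π / 6) := by
  simp only [triVertex, pt_one, Fin.val_zero, Fin.val_one, CharP.cast_eq_zero, Nat.cast_one,
    zero_mul, one_mul, add_zero]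
  rw [show b + 2 * π / 3 = b - π / 3 + π by ring, sin_add_pi, sin_sub, sin_sub,
    cos_pi_div_three, sin_pi_div_three, cos_pi_div_six, sin_pi_div_six]
  linear_combination (-cos b / 12) * Real.mul_self_sqrt (show (0 : ℝ) ≤ 3 by norm_num)

theorem sin_gt_of_67_deg_le {x : ℝ} (h₁ : 67 * π / 180 ≤ x) (h₂ : x ≤ π / 2) :
    0.92 < sin x := by
  set t := 7 * π / 180 with ht
  have ht₀ : 0.12217 < t := by linarith [pi_gt_d6]
  have ht₁ : t < 0.1225 := by linarith [pi_lt_d2]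
  have hcos : 0.9924 < cos t := by nlinarith [one_sub_sq_div_two_le_cos (x := t)]
  have hcube : t ^ 3 < 0.1225 ^ 3 := pow_lt_pow_left₀ ht₁ (by linarith) (by norm_num)
  have hsin : 0.1218 < sin t := by linarith [sin_gt_sub_cube (x := t) (by linarith)]
  have hsqrt : 1.732 < √3 := by rw [lt_sqrt (by norm_num)]; norm_num
  have h67 : sin (67 * π / 180) = √3 / 2 * cos t + 1 / 2 * sin t := by
    rw [← sin_pi_div_three, ← cos_pi_div_three, ← sin_add, ht]
    ring_nf
  calc (0.92 : ℝ) < sin (67 * π / 180) := by rw [h67]; nlinarith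
    _ ≤ sin x := sin_le_sin_of_le_of_le_pi_div_two (by linarith [pi_pos]) h₂ h₁

theorem sqrt_two_div_six_mul_sin_gt_of_78_deg_le {x : ℝ} (h₁ : 78 * π / 180 ≤ x)
    (h₂ : x ≤ π / 2) : 0.23 < √2 / 6 * sin x := by
  have hcos : 0.9779 < cos (π / 15) := by
    nlinarith [one_sub_sq_div_two_le_cos (x := π / 15), pi_lt_d2, pi_pos]
  have h78 : sin (78 * π / 180) = cos (π / 15) := by
    rw [← cos_pi_div_two_sub]
    ring_nf
  have hsin : cos (π / 15) ≤ sin x :=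
    h78 ▸ sin_le_sin_of_le_of_le_pi_div_two (by linarith [pi_pos]) h₂ h₁
  have hsqrt : 1.4142 < √2 := by rw [lt_sqrt (by norm_num)]; norm_num
  nlinarith

theorem outside_K1_large_area_general (x1 y1 a x2 y2 b : ℝ)
    (ha' : a ≤ Real.pi / 2)
    (hb : Real.pi / 3 ≤ b) (hb' : b ≤ 2 * Real.pi / 3)
    (h : 78 * Real.pi / 180 ≤ a ∨ b ≤ 83 * Real.pi / 180 ∨ 97 * Real.pi / 180 ≤ b) :
    area x1 y1 a x2 y2 b > 0.23 := by
  rcases h with ha78 | hb83 | hb97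
  · calc (0.23 : ℝ) < √2 / 6 * sin a := sqrt_two_div_six_mul_sin_gt_of_78_deg_le ha78 ha'
      _ = (sqVertex x1 y1 a 0 1 - sqVertex x1 y1 a 2 1) / 2 := by
        rw [sqVertex_zero_sub_two_snd]; ring
      _ ≤ area x1 y1 a x2 y2 b :=
        half_sub_le_area (sqVertex_mem_config ..) (sqVertex_mem_config ..)
  · have hsin : 0.92 < sin (b + π / 6) := by
      rw [← sin_pi_sub]
      exact sin_gt_of_67_deg_le (by linarith) (by linarith)
    calc (0.23 : ℝ) < 1 / 4 * sin (b + π / 6) := by linarith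
      _ = (triVertex x2 y2 b 0 1 - triVertex x2 y2 b 2 1) / 2 := by
        rw [triVertex_zero_sub_two_snd]; ring
      _ ≤ area x1 y1 a x2 y2 b :=
        half_sub_le_area (triVertex_mem_config ..) (triVertex_mem_config ..)
  · have hsin : 0.92 < sin (b - π / 6) := sin_gt_of_67_deg_le (by linarith) (by linarith)
    calc (0.23 : ℝ) < 1 / 4 * sin (b - π / 6) := by linarith
      _ = (triVertex x2 y2 b 0 1 - triVertex x2 y2 b 1 1) / 2 := by
        rw [triVertex_zero_sub_one_snd]; ring
      _ ≤ area x1 y1 a x2 y2 b :=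
        half_sub_le_area (triVertex_mem_config ..) (triVertex_mem_config ..)

theorem outside_K1_large_area (x1 y1 a x2 y2 b : ℝ)
    (ha : Real.pi / 4 ≤ a) (ha' : a ≤ Real.pi / 2)
    (hb : Real.pi / 3 ≤ b) (hb' : b ≤ 2 * Real.pi / 3)
    (h : 78 * Real.pi / 180 ≤ a ∨ b ≤ 83 * Real.pi / 180 ∨ 97 * Real.pi / 180 ≤ b) :
    area x1 y1 a x2 y2 b > 0.23 :=
  outside_K1_large_area_general x1 y1 a x2 y2 b ha' hb hb' h
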